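/- Let Λ = ℤⁿ + iℤⁿ ⊂ ℂⁿ and D = [0,1)ⁿ + i[0,1)ⁿ. There exists a constant C, depending only on n, with the following property: for every ε ∈ (0, 1], every Λ-periodic upper semicontinuous ψ : ℂⁿ → [−∞, ∞) such that z ↦ ψ(z) + ε|z|² is plurisubharmonic on ℂⁿ and ∫_D e^{ψ} dλ = 1, and every x ∈ ℂⁿ, one has e^{ψ(x)} ≤ C. -/

import Mathlib

open MeasureTheory Set
open scoped ENNReal NNReal

noncomputable section

/-- `log` with values in `EReal`, with `log 0 = ⊥` (and junk `⊥` for negative inputs). -/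
def elog (t : ℝ) : EReal := if t ≤ 0 then (⊥ : EReal) else ((Real.log t : ℝ) : EReal)

/-- The positive-part truncation `EReal → ℝ≥0∞`. -/
def erealToENNReal (x : EReal) : ℝ≥0∞ :=
  if x = ⊤ then ⊤ else ENNReal.ofReal x.toReal

/-- Integral of an `EReal`-valued function, as an `EReal`
(positive part minus negative part, each computed as a lower integral). -/
def eintegral {α : Type*} [MeasurableSpace α] (μ : Measure α) (u : α → EReal) : EReal :=
  ((∫⁻ x, erealToENNReal (u x) ∂μ : ℝ≥0∞) : EReal)
    - ((∫⁻ x, erealToENNReal (-(u x)) ∂μ : ℝ≥0∞) : EReal)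

/-- The mean of an `EReal`-valued function over the circle parameter `θ ∈ (0, 2π]`. -/
def circleMean (u : ℝ → EReal) : EReal :=
  (((2 * Real.pi)⁻¹ : ℝ) : EReal) *
    eintegral (volume.restrict (Set.Ioc (0 : ℝ) (2 * Real.pi))) u

/-- `u` is plurisubharmonic on an open set `Ω ⊆ ℂⁿ`: it is upper semicontinuous on `Ω`
and satisfies the sub-mean value inequality on every complex circle
whose closed disc hull lies in `Ω`. -/
def IsPSHOn {n : ℕ} (Ω : Set (Fin n → ℂ)) (u : (Fin n → ℂ) → EReal) : Prop :=
  UpperSemicontinuousOn u Ω ∧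
  ∀ a ∈ Ω, ∀ b : Fin n → ℂ, ∀ r : ℝ, 0 < r →
    (∀ l : ℂ, ‖l‖ ≤ r → a + l • b ∈ Ω) →
    u a ≤ circleMean (fun θ : ℝ =>
      u (a + (((r : ℂ) * Complex.exp (θ * Complex.I)) • b)))

/-- The open unit polydisk in `ℂⁿ`. -/
def openPolydisk (n : ℕ) : Set (Fin n → ℂ) := {z | ∀ i, ‖z i‖ < 1}

/-- The closed unit polydisk in `ℂⁿ`. -/
def closedPolydisk (n : ℕ) : Set (Fin n → ℂ) := {z | ∀ i, ‖z i‖ ≤ 1}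


/-- `ψ` is periodic with respect to the lattice `Λ = ℤⁿ + iℤⁿ ⊂ ℂⁿ`. -/
def LambdaPeriodic {n : ℕ} (ψ : (Fin n → ℂ) → EReal) : Prop :=
  ∀ z : Fin n → ℂ, ∀ k l : Fin n → ℤ,
    ψ (fun i => z i + (k i : ℂ) + (l i : ℂ) * Complex.I) = ψ z

/-- The fundamental domain `D = [0,1)ⁿ + i[0,1)ⁿ` of the torus `ℂⁿ/Λ`. -/
def fundDomain (n : ℕ) : Set (Fin n → ℂ) :=
  {z | ∀ i, (z i).re ∈ Set.Ico (0 : ℝ) 1 ∧ (z i).im ∈ Set.Ico (0 : ℝ) 1}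

/-- The class `A_ε` of admissible weights on the torus `ℂⁿ/Λ`: `Λ`-periodic upper
semicontinuous `ψ` with `ψ(z) + ε|z|²` plurisubharmonic and `∫_D e^ψ dλ = 1`. -/
def Aset (n : ℕ) (ε : ℝ) : Set ((Fin n → ℂ) → EReal) :=
  {ψ | LambdaPeriodic ψ ∧ UpperSemicontinuous ψ ∧
    IsPSHOn Set.univ (fun z => ψ z + ((ε * ∑ i, Complex.normSq (z i) : ℝ) : EReal)) ∧
    (∫⁻ z in fundDomain n, EReal.exp (ψ z)) = 1}

/-- The approximating canonical volume density `dV_ε(x) = sup{e^{ψ(x)} : ψ ∈ A_ε}`. -/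
def dVeps (n : ℕ) (ε : ℝ) (x : Fin n → ℂ) : ℝ≥0∞ :=
  ⨆ ψ ∈ Aset n ε, EReal.exp (ψ x)


/-!
The weight `u = ψ + ε|z|²` is plurisubharmonic, so its positive part `u⁺` satisfies the
sub-mean value inequality on every circle in a coordinate direction. Integrating in polar
coordinates, one coordinate at a time, gives `u⁺(x) · vol P ≤ ∫_P u⁺` for the unit polydisk
`P` around `x`. For `x ∈ D` we have `vol P = πⁿ ≥ 1`, `ε|z|² ≤ 9n` on `P`, and `P` is covered
by `9ⁿ` translates of `D` by `Λ`; periodicity and `∫_D e^ψ = 1` then give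
`∫_P u⁺ ≤ (9ⁿ + 9n) vol P`, so `ψ ≤ 9ⁿ + 9n` on `D`, hence everywhere.
-/

open Real

theorem lintegral_biUnion_finset_le {α ι : Type*} [MeasurableSpace α] {μ : Measure α}
    [SFinite μ] (f : α → ℝ≥0∞) (s : Finset ι) (t : ι → Set α) :
    ∫⁻ a in ⋃ i ∈ s, t i, f a ∂μ ≤ ∑ i ∈ s, ∫⁻ a in t i, f a ∂μ := by
  simp only [← withDensity_apply' f]
  exact measure_biUnion_finset_le s t

theorem setLIntegral_Ioo_zero_ofReal (ρ : ℝ) :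
    ∫⁻ r in Ioo 0 ρ, ENNReal.ofReal r = ENNReal.ofReal ρ ^ 2 / 2 := by
  rcases le_or_gt ρ 0 with hρ | hρ
  · simp [ENNReal.ofReal_of_nonpos hρ, hρ]
  rw [← ofReal_integral_eq_lintegral_ofReal, ← integral_Ioc_eq_integral_Ioo,
    ← intervalIntegral.integral_of_le hρ.le, integral_id, ← ENNReal.ofReal_pow hρ.le,
    ← ENNReal.ofReal_ofNat 2, ← ENNReal.ofReal_div_of_pos two_pos]
  · ring_nf
  · exact continuous_id.integrableOn_Icc.mono_set Ioo_subset_Icc_self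
  · exact ae_restrict_of_forall_mem measurableSet_Ioo fun r hr => hr.1.le

theorem setLIntegral_Ioc_zero_two_pi_eq_Ioo {f : ℝ → ℝ≥0∞}
    (hf : Function.Periodic f (2 * π)) :
    ∫⁻ θ in Ioc 0 (2 * π), f θ = ∫⁻ θ in Ioo (-π) π, f θ := by
  have h := (isAddFundamentalDomain_Ioc two_pi_pos 0).setLIntegral_eq
    (isAddFundamentalDomain_Ioc two_pi_pos (-π)) f ?_
  · rw [zero_add] at h
    rw [h, show -π + 2 * π = π by ring]
    exact setLIntegral_congr Ioo_ae_eq_Ioc.symm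
  · rintro ⟨_, k, rfl⟩ θ
    simpa [AddSubgroup.vadd_def, add_comm] using hf.zsmul k θ

theorem setLIntegral_polar_le_setLIntegral_closedBall_zero (f : ℂ → ℝ≥0∞) (ρ : ℝ) :
    ∫⁻ p in Ioo 0 ρ ×ˢ Ioo (-π) π,
        ENNReal.ofReal p.1 * f (p.1 * Complex.exp (p.2 * Complex.I)) ≤
      ∫⁻ z in Metric.closedBall 0 ρ, f z := by
  have polar_symm : ∀ p, Complex.polarCoord.symm p = p.1 * Complex.exp (p.2 * Complex.I) :=
    fun p => by rw [Complex.polarCoord_symm_apply, Complex.exp_ofReal_mul_I]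
  rw [← lintegral_indicator measurableSet_closedBall, ← Complex.lintegral_comp_polarCoord_symm,
    ← lintegral_indicator (measurableSet_Ioo.prod measurableSet_Ioo),
    ← lintegral_indicator polarCoord.open_target.measurableSet]
  refine lintegral_mono fun p => ?_
  by_cases hp : p ∈ Ioo 0 ρ ×ˢ Ioo (-π) π
  · have hp_target : p ∈ polarCoord.target := ⟨hp.1.1, hp.2⟩
    have hp_ball : Complex.polarCoord.symm p ∈ Metric.closedBall 0 ρ := by
      rw [mem_closedBall_zero_iff, Complex.norm_polarCoord_symm, abs_of_pos hp.1.1]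
      exact hp.1.2.le
    rw [polar_symm] at hp_ball
    simp only [indicator_of_mem hp, indicator_of_mem hp_target, indicator_of_mem hp_ball,
      polar_symm, smul_eq_mul, le_refl]
  · simp [indicator_of_notMem hp]

theorem mul_volume_closedBall_le_setLIntegral {f : ℂ → ℝ≥0∞} (hf : Measurable f) {a : ℂ}
    {ρ : ℝ} {c : ℝ≥0∞}
    (h : ∀ r ∈ Ioo 0 ρ, c * ENNReal.ofReal (2 * π) ≤
      ∫⁻ θ in Ioc 0 (2 * π), f (a + r * Complex.exp (θ * Complex.I))) :
    c * volume (Metric.closedBall a ρ) ≤ ∫⁻ z in Metric.closedBall a ρ, f z := by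
  set g : ℝ × ℝ → ℝ≥0∞ := fun p => f (a + p.1 * Complex.exp (p.2 * Complex.I))
  have circle : ∀ r ∈ Ioo 0 ρ, ENNReal.ofReal r * (c * ENNReal.ofReal (2 * π)) ≤
      ∫⁻ θ in Ioo (-π) π, ENNReal.ofReal r * g (r, θ) := by
    intro r hr
    rw [lintegral_const_mul' _ _ ENNReal.ofReal_ne_top, ← setLIntegral_Ioc_zero_two_pi_eq_Ioo]
    · gcongr; exact h r hr
    · intro θ
      simp only [g, Complex.ofReal_add, add_mul, Complex.exp_add, Complex.ofReal_mul,
        Complex.ofReal_ofNat, Complex.exp_two_pi_mul_I, mul_one]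
  have translate := (measurePreserving_add_left volume a).setLIntegral_comp_preimage_emb
    (measurableEmbedding_addLeft a) f (Metric.closedBall a ρ)
  rw [Metric.preimage_add_left_closedBall, neg_add_cancel] at translate
  calc c * volume (Metric.closedBall a ρ)
      = ∫⁻ r in Ioo 0 ρ, ENNReal.ofReal r * (c * ENNReal.ofReal (2 * π)) := by
        rw [lintegral_mul_const _ ENNReal.measurable_ofReal, setLIntegral_Ioo_zero_ofReal,
          Complex.volume_closedBall, ← ENNReal.ofReal_coe_nnreal, NNReal.coe_real_pi,
          ENNReal.ofReal_mul two_pos.le, ENNReal.ofReal_ofNat, ENNReal.div_eq_inv_mul]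
        calc _ = c * ENNReal.ofReal ρ ^ 2 * ENNReal.ofReal π * (2⁻¹ * 2) := by
              rw [ENNReal.inv_mul_cancel two_ne_zero ENNReal.ofNat_ne_top, mul_one]; ring
          _ = _ := by ring
    _ ≤ ∫⁻ r in Ioo 0 ρ, ∫⁻ θ in Ioo (-π) π, ENNReal.ofReal r * g (r, θ) :=
        setLIntegral_mono' measurableSet_Ioo circle
    _ = ∫⁻ p in Ioo 0 ρ ×ˢ Ioo (-π) π, ENNReal.ofReal p.1 * g p := by
        rw [Measure.volume_eq_prod, ← Measure.prod_restrict, lintegral_prod _ (by fun_prop)]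
    _ ≤ ∫⁻ z in Metric.closedBall 0 ρ, f (a + z) :=
        setLIntegral_polar_le_setLIntegral_closedBall_zero (fun z => f (a + z)) ρ
    _ = ∫⁻ z in Metric.closedBall a ρ, f z := translate

theorem mul_volume_polydisk_le_setLIntegral {ι : Type*} [Fintype ι] [DecidableEq ι]
    {w : (ι → ℂ) → ℝ≥0∞} (hw : Measurable w) {ρ : ℝ}
    (h : ∀ a i, ∀ r ∈ Ioo 0 ρ, w a * ENNReal.ofReal (2 * π) ≤
      ∫⁻ θ in Ioc 0 (2 * π), w (Function.update a i (a i + r * Complex.exp (θ * Complex.I))))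
    (x : ι → ℂ) :
    w x * volume (univ.pi fun i => Metric.closedBall (x i) ρ) ≤
      ∫⁻ z in univ.pi fun i => Metric.closedBall (x i) ρ, w z := by
  set μ : ∀ i, Measure ℂ := fun i => volume.restrict (Metric.closedBall (x i) ρ)
  have marginal : ∀ s : Finset ι, ∀ y, (∀ i ∈ s, y i = x i) →
      w y * ∏ i ∈ s, volume (Metric.closedBall (x i) ρ) ≤ (∫⋯∫⁻_s, w ∂μ) y := by
    intro s
    induction s using Finset.induction_on with
    | empty => simp
    | insert i s hi ih =>
      intro y hy
      have hyi : y i = x i := hy i (Finset.mem_insert_self i s)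
      have disc := mul_volume_closedBall_le_setLIntegral (hw.comp (measurable_update y))
        (a := y i) (ρ := ρ) (c := w y) (by simpa using h y i)
      rw [hyi] at disc
      calc w y * ∏ j ∈ insert i s, volume (Metric.closedBall (x j) ρ)
          = (w y * volume (Metric.closedBall (x i) ρ)) *
              ∏ j ∈ s, volume (Metric.closedBall (x j) ρ) := by
            rw [Finset.prod_insert hi]; ring
        _ ≤ (∫⁻ t in Metric.closedBall (x i) ρ, w (Function.update y i t)) *
              ∏ j ∈ s, volume (Metric.closedBall (x j) ρ) := by gcongr; exact disc
        _ = ∫⁻ t in Metric.closedBall (x i) ρ, w (Function.update y i t) *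
              ∏ j ∈ s, volume (Metric.closedBall (x j) ρ) :=
            (lintegral_mul_const _ (hw.comp (measurable_update y))).symm
        _ ≤ ∫⁻ t, (∫⋯∫⁻_s, w ∂μ) (Function.update y i t) ∂μ i := by
            refine lintegral_mono fun t => ih _ fun j hj => ?_
            rw [Function.update_of_ne (ne_of_mem_of_not_mem hj hi)]
            exact hy j (Finset.mem_insert_of_mem hj)
        _ = (∫⋯∫⁻_insert i s, w ∂μ) y := (lmarginal_insert _ hw hi y).symm
  have := marginal Finset.univ x fun _ _ => rfl
  rwa [lmarginal_univ, ← Measure.restrict_pi_pi, ← volume_pi, ← volume_pi_pi] at this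

theorem EReal.toENNReal_le_exp (x : EReal) : x.toENNReal ≤ EReal.exp x := by
  induction x with
  | bot => simp
  | top => simp
  | coe x => simpa using ENNReal.ofReal_le_ofReal (by linarith [Real.add_one_le_exp x])

theorem EReal.le_coe_toENNReal (x : EReal) : x ≤ x.toENNReal := by
  rw [EReal.coe_toENNReal_eq_max]; exact le_max_right 0 x

-- `erealToENNReal` is `EReal.toENNReal` by definition, so `circleMean` unfolds to its API.
theorem toENNReal_mul_two_pi_le_of_le_circleMean {v : EReal} {u : ℝ → EReal}
    (h : v ≤ circleMean u) :
    v.toENNReal * ENNReal.ofReal (2 * π) ≤ ∫⁻ θ in Ioc 0 (2 * π), (u θ).toENNReal := by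
  set I := ∫⁻ θ in Ioc 0 (2 * π), (u θ).toENNReal
  have hmean : circleMean u ≤ (((2 * π)⁻¹ : ℝ) : EReal) * I := by
    unfold circleMean eintegral
    gcongr
    exact (EReal.sub_le_sub le_rfl (EReal.coe_ennreal_nonneg _)).trans_eq (sub_zero _)
  have := EReal.toENNReal_le_toENNReal (h.trans hmean)
  rw [EReal.toENNReal_mul (by exact_mod_cast (inv_pos.mpr two_pi_pos).le),
    EReal.real_coe_toENNReal, EReal.toENNReal_coe] at this
  calc v.toENNReal * ENNReal.ofReal (2 * π)
      ≤ ENNReal.ofReal (2 * π)⁻¹ * I * ENNReal.ofReal (2 * π) := by gcongr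
    _ = I := by
      rw [mul_comm, ← mul_assoc, ← ENNReal.ofReal_mul two_pi_pos.le,
        mul_inv_cancel₀ two_pi_pos.ne', ENNReal.ofReal_one, one_mul]

theorem IsPSHOn.toENNReal_mul_two_pi_le {n : ℕ} {u : (Fin n → ℂ) → EReal}
    (hu : IsPSHOn univ u) (a : Fin n → ℂ) (i : Fin n) {r : ℝ} (hr : 0 < r) :
    (u a).toENNReal * ENNReal.ofReal (2 * π) ≤ ∫⁻ θ in Ioc 0 (2 * π),
      (u (Function.update a i (a i + r * Complex.exp (θ * Complex.I)))).toENNReal := by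
  have hline : ∀ l : ℂ, a + l • Pi.single i 1 = Function.update a i (a i + l) := fun l => by
    ext j; by_cases hj : j = i <;> simp [hj]
  have := hu.2 a (mem_univ a) (Pi.single i 1) r hr fun _ _ => mem_univ _
  simpa only [hline] using toENNReal_mul_two_pi_le_of_le_circleMean this

def latticeVec {n : ℕ} (k l : Fin n → ℤ) : Fin n → ℂ := fun i => k i + l i * Complex.I

theorem LambdaPeriodic.apply_sub_latticeVec {n : ℕ} {ψ : (Fin n → ℂ) → EReal}
    (hψ : LambdaPeriodic ψ) (z : Fin n → ℂ) (k l : Fin n → ℤ) :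
    ψ (z - latticeVec k l) = ψ z := by
  rw [← hψ (z - latticeVec k l) k l]
  congr 1
  ext i
  simp only [latticeVec, Pi.sub_apply]
  ring

theorem sub_latticeVec_floor_mem_fundDomain {n : ℕ} (z : Fin n → ℂ) :
    z - latticeVec (fun i => ⌊(z i).re⌋) (fun i => ⌊(z i).im⌋) ∈ fundDomain n := by
  intro i
  simp only [latticeVec, Pi.sub_apply, Complex.sub_re, Complex.sub_im, Complex.add_re,
    Complex.add_im, Complex.mul_re, Complex.mul_im, Complex.intCast_re, Complex.intCast_im,
    Complex.I_re, Complex.I_im]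
  simp only [mul_zero, mul_one, sub_zero, zero_add, add_zero, Int.self_sub_floor]
  exact ⟨⟨Int.fract_nonneg _, Int.fract_lt_one _⟩, ⟨Int.fract_nonneg _, Int.fract_lt_one _⟩⟩

theorem LambdaPeriodic.setLIntegral_preimage_sub_latticeVec {n : ℕ}
    {ψ : (Fin n → ℂ) → EReal} (hψ : LambdaPeriodic ψ) (s : Set (Fin n → ℂ)) (k l : Fin n → ℤ) :
    ∫⁻ z in (· - latticeVec k l) ⁻¹' s, EReal.exp (ψ z) = ∫⁻ z in s, EReal.exp (ψ z) := by
  have := (measurePreserving_sub_right volume (latticeVec k l)).setLIntegral_comp_preimage_emb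
    (measurableEmbedding_subRight _) (fun z => EReal.exp (ψ z)) s
  simpa only [hψ.apply_sub_latticeVec] using this

theorem Int.floor_mem_Icc_of_abs_sub_le {s t : ℝ} (hs : s ∈ Ico 0 1) (ht : |t - s| ≤ 1) :
    ⌊t⌋ ∈ Finset.Icc (-1) 1 := by
  rw [abs_le] at ht
  rw [Finset.mem_Icc, Int.le_floor, Int.floor_le_iff]
  push_cast
  constructor <;> linarith [hs.1, hs.2]

theorem LambdaPeriodic.setLIntegral_polydisk_le {n : ℕ} {ψ : (Fin n → ℂ) → EReal}
    (hψ : LambdaPeriodic ψ) {x : Fin n → ℂ} (hx : x ∈ fundDomain n) :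
    ∫⁻ z in univ.pi fun i => Metric.closedBall (x i) 1, EReal.exp (ψ z) ≤
      9 ^ n * ∫⁻ z in fundDomain n, EReal.exp (ψ z) := by
  set S : Finset (Fin n → ℤ) := Fintype.piFinset fun _ => Finset.Icc (-1) 1
  have cover : (univ.pi fun i => Metric.closedBall (x i) 1) ⊆
      ⋃ kl ∈ S ×ˢ S, (· - latticeVec kl.1 kl.2) ⁻¹' fundDomain n := by
    intro z hz
    refine mem_iUnion₂.mpr ⟨((fun i => ⌊(z i).re⌋), (fun i => ⌊(z i).im⌋)), ?_,
      sub_latticeVec_floor_mem_fundDomain z⟩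
    have hdist : ∀ i, ‖z i - x i‖ ≤ 1 := fun i => by
      simpa [Complex.dist_eq] using hz i (mem_univ i)
    simp only [Finset.mem_product, Fintype.mem_piFinset, S]
    exact ⟨fun i => Int.floor_mem_Icc_of_abs_sub_le (hx i).1
        (by simpa using (Complex.abs_re_le_norm _).trans (hdist i)),
      fun i => Int.floor_mem_Icc_of_abs_sub_le (hx i).2
        (by simpa using (Complex.abs_im_le_norm _).trans (hdist i))⟩
  calc ∫⁻ z in univ.pi fun i => Metric.closedBall (x i) 1, EReal.exp (ψ z)
      ≤ ∫⁻ z in ⋃ kl ∈ S ×ˢ S, (· - latticeVec kl.1 kl.2) ⁻¹' fundDomain n,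
          EReal.exp (ψ z) :=
        lintegral_mono_set cover
    _ ≤ ∑ kl ∈ S ×ˢ S,
          ∫⁻ z in (· - latticeVec kl.1 kl.2) ⁻¹' fundDomain n, EReal.exp (ψ z) :=
        lintegral_biUnion_finset_le _ _ _
    _ = 9 ^ n * ∫⁻ z in fundDomain n, EReal.exp (ψ z) := by
        simp only [hψ.setLIntegral_preimage_sub_latticeVec, Finset.sum_const,
          Finset.card_product, S, Fintype.card_piFinset_const, Int.card_Icc, nsmul_eq_mul,
          Int.reduceNeg, Int.reduceSub, Int.reduceAdd, Int.reduceToNat]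
        norm_num [← mul_pow]

theorem sum_normSq_le_of_mem_polydisk {n : ℕ} {x z : Fin n → ℂ} (hx : x ∈ fundDomain n)
    (hz : z ∈ univ.pi fun i => Metric.closedBall (x i) 1) :
    ∑ i, Complex.normSq (z i) ≤ 9 * n := by
  have hzi : ∀ i, ‖z i‖ ≤ 3 := fun i => by
    have hxi : ‖x i‖ ≤ 2 := by
      refine (Complex.norm_le_abs_re_add_abs_im _).trans ?_
      rw [abs_of_nonneg (hx i).1.1, abs_of_nonneg (hx i).2.1]
      linarith [(hx i).1.2, (hx i).2.2]
    calc ‖z i‖ ≤ ‖z i - x i‖ + ‖x i‖ := norm_le_norm_sub_add _ _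
      _ ≤ 1 + 2 := add_le_add (by simpa [Complex.dist_eq] using hz i (mem_univ i)) hxi
      _ = 3 := by norm_num
  calc ∑ i, Complex.normSq (z i) ≤ ∑ _i : Fin n, (9 : ℝ) :=
        Finset.sum_le_sum fun i _ => by
          rw [← Complex.sq_norm]; nlinarith [hzi i, norm_nonneg (z i)]
    _ = 9 * n := by simp [mul_comm]

theorem one_le_volume_polydisk {n : ℕ} (x : Fin n → ℂ) :
    1 ≤ volume (univ.pi fun i => Metric.closedBall (x i) 1) := by
  rw [volume_pi_pi]
  refine Finset.one_le_prod' fun i _ => ?_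
  rw [Complex.volume_closedBall, ENNReal.ofReal_one, one_pow, one_mul,
    ← ENNReal.ofReal_coe_nnreal, NNReal.coe_real_pi, ← ENNReal.ofReal_one]
  exact ENNReal.ofReal_le_ofReal (by linarith [pi_gt_three])

theorem toENNReal_le_of_mem_Aset_of_mem_fundDomain {n : ℕ} {ε : ℝ} (hε : ε ≤ 1)
    {ψ : (Fin n → ℂ) → EReal} (hψ : ψ ∈ Aset n ε) {x : Fin n → ℂ} (hx : x ∈ fundDomain n) :
    (ψ x + ((ε * ∑ i, Complex.normSq (x i) : ℝ) : EReal)).toENNReal ≤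
      ENNReal.ofReal (9 ^ n + 9 * n) := by
  obtain ⟨hper, -, hpsh, hint⟩ := hψ
  set u : (Fin n → ℂ) → EReal := fun z => ψ z + ((ε * ∑ i, Complex.normSq (z i) : ℝ) : EReal)
  set P := univ.pi fun i => Metric.closedBall (x i) 1
  have hP : volume P ≠ ⊤ :=
    (isCompact_univ_pi fun i => isCompact_closedBall (x i) 1).measure_lt_top.ne
  have hw : Measurable fun z => (u z).toENNReal :=
    (upperSemicontinuousOn_univ_iff.mp hpsh.1).measurable.ereal_toENNReal
  have hpoly := mul_volume_polydisk_le_setLIntegral hw (ρ := 1)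
    (fun a i r hr => hpsh.toENNReal_mul_two_pi_le a i hr.1) x
  have hweight : ∀ z ∈ P, (u z).toENNReal ≤ EReal.exp (ψ z) + ENNReal.ofReal (9 * n) :=
    fun z hz => EReal.toENNReal_add_le.trans <| add_le_add (EReal.toENNReal_le_exp _) <|
      ENNReal.ofReal_le_ofReal <| (mul_le_of_le_one_left (Finset.sum_nonneg fun i _ =>
        Complex.normSq_nonneg _) hε).trans (sum_normSq_le_of_mem_polydisk hx hz)
  refine (ENNReal.mul_le_mul_iff_left (one_pos.trans_le (one_le_volume_polydisk x)).ne' hP).mp ?_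
  calc (u x).toENNReal * volume P ≤ ∫⁻ z in P, (u z).toENNReal := hpoly
    _ ≤ ∫⁻ z in P, (EReal.exp (ψ z) + ENNReal.ofReal (9 * n)) :=
      setLIntegral_mono' (MeasurableSet.univ_pi fun _ => measurableSet_closedBall) hweight
    _ = (∫⁻ z in P, EReal.exp (ψ z)) + ENNReal.ofReal (9 * n) * volume P := by
      rw [lintegral_add_right _ measurable_const, setLIntegral_const]
    _ ≤ 9 ^ n * volume P + ENNReal.ofReal (9 * n) * volume P := by
      gcongr
      calc ∫⁻ z in P, EReal.exp (ψ z) ≤ 9 ^ n := by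
            simpa [hint] using hper.setLIntegral_polydisk_le hx
        _ ≤ 9 ^ n * volume P := le_mul_of_one_le_right' (one_le_volume_polydisk x)
    _ = ENNReal.ofReal (9 ^ n + 9 * n) * volume P := by
      rw [← add_mul, ENNReal.ofReal_add (by positivity) (by positivity)]
      norm_num

theorem le_of_mem_Aset_of_mem_fundDomain {n : ℕ} {ε : ℝ} (hε : ε ∈ Ioc 0 1)
    {ψ : (Fin n → ℂ) → EReal} (hψ : ψ ∈ Aset n ε) {x : Fin n → ℂ} (hx : x ∈ fundDomain n) :
    ψ x ≤ ((9 ^ n + 9 * n : ℝ) : EReal) :=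
  calc ψ x ≤ ψ x + ((ε * ∑ i, Complex.normSq (x i) : ℝ) : EReal) :=
        le_add_of_nonneg_right <| EReal.coe_nonneg.mpr <|
          mul_nonneg hε.1.le (Finset.sum_nonneg fun i _ => Complex.normSq_nonneg _)
    _ ≤ (ψ x + ((ε * ∑ i, Complex.normSq (x i) : ℝ) : EReal)).toENNReal :=
        EReal.le_coe_toENNReal _
    _ ≤ ENNReal.ofReal (9 ^ n + 9 * n) := EReal.coe_ennreal_le_coe_ennreal_iff.mpr
        (toENNReal_le_of_mem_Aset_of_mem_fundDomain hε.2 hψ hx)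
    _ = ((9 ^ n + 9 * n : ℝ) : EReal) := by
        rw [EReal.coe_ennreal_ofReal, max_eq_left (by positivity)]

/-- Lemma 2.1 for the torus `ℂⁿ/Λ`: a uniform upper bound, depending only on `n`,
for all admissible weights `ψ ∈ A_ε` and all `ε ∈ (0,1]`: `e^{ψ(x)} ≤ C`. -/
theorem torus_uniform_upper_bound (n : ℕ) :
    ∃ C : ℝ≥0∞, C ≠ ⊤ ∧
      ∀ ε : ℝ, ε ∈ Set.Ioc (0 : ℝ) 1 → ∀ ψ ∈ Aset n ε, ∀ x : Fin n → ℂ,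
        EReal.exp (ψ x) ≤ C := by
  refine ⟨ENNReal.ofReal (rexp (9 ^ n + 9 * n)), ENNReal.ofReal_ne_top, fun ε hε ψ hψ x => ?_⟩
  rw [← hψ.1.apply_sub_latticeVec x (fun i => ⌊(x i).re⌋) (fun i => ⌊(x i).im⌋),
    ← EReal.exp_coe]
  exact EReal.exp_monotone
    (le_of_mem_Aset_of_mem_fundDomain hε hψ (sub_latticeVec_floor_mem_fundDomain x))
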